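/- arXiv:1001.2766 — 5 statements merged into one kernel-verified Lean document; each statement's English description precedes it below -/
import Mathlib

section
/- For any real numbers $x, z \in [0,1]$ with $z\sqrt{2-z^2} \leq x \leq z(2-z)$ and $0 < z < 1$, we have $\sqrt{\frac{x(1-x)}{z(1-z)}} + \sqrt{z(1+z)} \leq 1.85$. -/
/-!
For fixed `z`, `x ↦ x (1 - x)` is a parabola with vertex at `1/2`, so on the admissible interval
`[z √(2 - z²), z (2 - z)]` it is bounded by `1/4`, and by its value at the endpoint nearer to `1/2`
when the whole interval lies on one side of `1/2`. Squaring, the claim becomes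
`x (1 - x) ≤ z (1 - z) (1.85 - √(z (1 + z)))²`, which reduces to one inequality in `z` alone on each
of three ranges: `z ≤ 0.29` (right endpoint `z (2 - z) ≤ 1/2`), `0.29 ≤ z ≤ 0.45` (the bound `1/4`)
and `0.45 ≤ z` (left endpoint `z √(2 - z²) ≥ 1/2`). On short subintervals the square roots are
replaced by tangent-line upper bounds `2 a √u ≤ u + a²`, leaving polynomial inequalities.
-/

open Real

lemma mul_one_sub_le_of_le_of_add_le {x y : ℝ} (hxy : x ≤ y) (hsum : x + y ≤ 1) :
    x * (1 - x) ≤ y * (1 - y) := by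
  nlinarith [mul_nonneg (sub_nonneg.2 hxy) (sub_nonneg.2 hsum)]

lemma mul_one_sub_le_of_le_of_le_add {x y : ℝ} (hyx : y ≤ x) (hsum : 1 ≤ x + y) :
    x * (1 - x) ≤ y * (1 - y) := by
  nlinarith [mul_nonneg (sub_nonneg.2 hyx) (sub_nonneg.2 hsum)]

lemma mul_one_sub_le_quarter (x : ℝ) : x * (1 - x) ≤ 1 / 4 := by
  nlinarith [sq_nonneg (x - 1 / 2)]

lemma two_mul_mul_sqrt_le (a : ℝ) {u : ℝ} (hu : 0 ≤ u) : 2 * a * √u ≤ u + a ^ 2 := by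
  nlinarith [two_mul_le_add_sq a √u, sq_sqrt hu]

lemma sqrt_mul_one_add_le {z : ℝ} (hz : 0 ≤ z) : 3.7 * √(z * (1 + z)) ≤ 1.4225 + 4 * z := by
  have hs := sq_sqrt (by positivity : 0 ≤ z * (1 + z))
  nlinarith [sqrt_nonneg (z * (1 + z)), sq_nonneg (z - 1 / 2)]

lemma one_sub_mul_two_sub_le {z : ℝ} (hz : 0 ≤ z) :
    (1 - z) * (2 - z) ≤ (1.85 - √(z * (1 + z))) ^ 2 := by
  have hs := sq_sqrt (by positivity : 0 ≤ z * (1 + z))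
  nlinarith [sqrt_mul_one_add_le hz]

lemma quarter_le_mul_one_sub_mul {z : ℝ} (hl : 0.29 ≤ z) (hr : z ≤ 0.45) :
    1 / 4 ≤ z * (1 - z) * (1.85 - √(z * (1 + z))) ^ 2 := by
  have hu : 0 ≤ z * (1 + z) := by positivity
  have hs := sq_sqrt hu
  have hzz : 0 ≤ z * (1 - z) := by nlinarith
  rcases le_total z 0.37 with h | h
  · nlinarith [mul_le_mul_of_nonneg_left (two_mul_mul_sqrt_le 0.66 hu) hzz,
      mul_nonneg (sub_nonneg.2 hl) (sub_nonneg.2 h)]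
  · nlinarith [mul_le_mul_of_nonneg_left (two_mul_mul_sqrt_le 0.76 hu) hzz,
      mul_nonneg (sub_nonneg.2 h) (sub_nonneg.2 hr)]

/- This is `t (1 - z t) ≤ (1 - z) (1.85 - s)²` expanded with `t² = 2 - z²` and `s² = z (1 + z)`.
Equality holds at `z = 1`, hence the fine subdivision; on each piece the tangent points are
`√(2 - m²)` and `√(m (1 + m))`, rounded, for a point `m` of the piece. -/
lemma sqrt_two_sub_sq_add_le {z : ℝ} (hl : 0.45 ≤ z) (hr : z ≤ 1) :
    √(2 - z ^ 2) + 3.7 * (1 - z) * √(z * (1 + z)) ≤ 3.4225 - 0.4225 * z - 2 * z ^ 3 := by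
  have hv : 0 ≤ 2 - z ^ 2 := by nlinarith
  have hu : 0 ≤ z * (1 + z) := by positivity
  have h1z : 0 ≤ 1 - z := by linarith
  have tangents (a b : ℝ) : 2 * a * √(2 - z ^ 2) ≤ 2 - z ^ 2 + a ^ 2 ∧
      2 * b * ((1 - z) * √(z * (1 + z))) ≤ (1 - z) * (z * (1 + z) + b ^ 2) :=
    ⟨two_mul_mul_sqrt_le a hv, by nlinarith [mul_le_mul_of_nonneg_left (two_mul_mul_sqrt_le b hu) h1z]⟩
  rcases le_total z 0.58 with h₁ | h₁
  · nlinarith [tangents 1.318 0.884, mul_nonneg (sub_nonneg.2 hl) (sub_nonneg.2 h₁)]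
  rcases le_total z 0.645 with h₂ | h₂
  · nlinarith [tangents 1.276 0.992, mul_nonneg (sub_nonneg.2 h₁) (sub_nonneg.2 h₂)]
  rcases le_total z 0.73 with h₃ | h₃
  · nlinarith [tangents 1.236 1.077, mul_nonneg (sub_nonneg.2 h₂) (sub_nonneg.2 h₃)]
  rcases le_total z 0.83 with h₄ | h₄
  · nlinarith [tangents 1.179 1.18, mul_nonneg (sub_nonneg.2 h₃) (sub_nonneg.2 h₄)]
  rcases le_total z 0.93 with h₅ | h₅
  · nlinarith [tangents 1.107 1.29, mul_nonneg (sub_nonneg.2 h₄) (sub_nonneg.2 h₅)]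
  · nlinarith [tangents 1 1.414, mul_nonneg (sub_nonneg.2 h₅) h1z, pow_nonneg h1z 3]

lemma mul_one_sub_le_of_le_of_le {x z : ℝ} (hz0 : 0 ≤ z) (hz1 : z ≤ 1)
    (h1 : z * √(2 - z ^ 2) ≤ x) (h2 : x ≤ z * (2 - z)) :
    x * (1 - x) ≤ z * (1 - z) * (1.85 - √(z * (1 + z))) ^ 2 := by
  rcases le_total z 0.29 with hsmall | hl
  · calc x * (1 - x) ≤ z * (2 - z) * (1 - z * (2 - z)) :=
          mul_one_sub_le_of_le_of_add_le h2 (by nlinarith)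
      _ = z * (1 - z) * ((1 - z) * (2 - z)) := by ring
      _ ≤ _ := mul_le_mul_of_nonneg_left (one_sub_mul_two_sub_le hz0) (by nlinarith)
  rcases le_total z 0.45 with hr | hlarge
  · exact (mul_one_sub_le_quarter x).trans (quarter_le_mul_one_sub_mul hl hr)
  set t := √(2 - z ^ 2)
  have ht2 : t ^ 2 = 2 - z ^ 2 := sq_sqrt (by nlinarith)
  have hzt : 1 / 2 ≤ z * t := by
    have hsq : (1 / 2) ^ 2 ≤ (z * t) ^ 2 := by
      rw [mul_pow, ht2]
      nlinarith [mul_nonneg (by nlinarith : 0 ≤ 1 - z ^ 2) (by nlinarith : 0 ≤ z ^ 2 - 0.2025)]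
    exact le_of_sq_le_sq hsq (mul_nonneg hz0 (sqrt_nonneg _))
  calc x * (1 - x) ≤ z * t * (1 - z * t) := mul_one_sub_le_of_le_of_le_add h1 (by linarith)
    _ = z * (t - 2 * z + z ^ 3) := by linear_combination (-z ^ 2) * ht2
    _ ≤ _ := by
      linear_combination z * sqrt_two_sub_sq_add_le hlarge hz1 +
        (-(z * (1 - z))) * sq_sqrt (by positivity : 0 ≤ z * (1 + z))

theorem one_step_contraction_general (x z : ℝ) (hz0 : 0 < z) (hz1 : z < 1)
    (h1 : z * Real.sqrt (2 - z^2) ≤ x) (h2 : x ≤ z * (2 - z)) :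
    Real.sqrt (x * (1 - x) / (z * (1 - z))) + Real.sqrt (z * (1 + z)) ≤ 1.85 := by
  have hs : √(z * (1 + z)) ≤ 1.85 := by
    rw [sqrt_le_left (by norm_num)]
    nlinarith
  suffices √(x * (1 - x) / (z * (1 - z))) ≤ 1.85 - √(z * (1 + z)) by linarith
  rw [sqrt_le_left (by linarith), div_le_iff₀ (by nlinarith)]
  exact (mul_one_sub_le_of_le_of_le hz0.le hz1.le h1 h2).trans_eq (mul_comm _ _)

theorem one_step_contraction (x z : ℝ) (hx : x ∈ Set.Icc (0:ℝ) 1)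
    (hz : z ∈ Set.Icc (0:ℝ) 1) (hz0 : 0 < z) (hz1 : z < 1)
    (h1 : z * Real.sqrt (2 - z^2) ≤ x) (h2 : x ≤ z * (2 - z)) :
    Real.sqrt (x * (1 - x) / (z * (1 - z))) + Real.sqrt (z * (1 + z)) ≤ 1.85 :=
  one_step_contraction_general x z hz0 hz1 h1 h2
end

section
/- Let $(B_n)_{n\geq 1}$ be i.i.d. Bernoulli(1/2) and define the process $A_n$ by $A_0 = a_0 > 0$, $A_{n+1} = 2A_n$ if $B_{n+1}=1$ and $A_{n+1} = A_n - 1$ if $B_{n+1}=0$. Then for every $\beta$ with $0 < \beta < a_0$ and every $n \in \mathbb{N}$, $\mathbb{P}\big(A_n \geq \beta \, 2^{\sum_{i=1}^n B_i}\big) \geq 1 - \frac{2}{2^{(a_0-\beta)/2}}$. -/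
/-!
The event depends only on the coin path `(B₁, …, Bₙ)`, which independence makes uniform on
`Bool^n`, so it suffices to count the paths along which `Aₙ < β 2^{Sₙ}`. Reading the first coin
turns `(a, β)` into `(2a, 2β)` or `(a - 1, β)`, i.e. the margin `c = a - β` into `2c` or `c - 1`.
The function `g c = min 1 (2 · 2^{-c/2})` satisfies `g (2c) / 2 + g (c - 1) / 2 ≤ g c` and is `1`
for `c < 0`, so by induction at most `2^n g (a - β)` of the `2^n` paths are bad.
-/

open MeasureTheory ProbabilityTheory Finset

def coinStep (a : ℝ) (b : Bool) : ℝ := if b then 2 * a else a - 1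

def runProcess {n : ℕ} (a : ℝ) (v : Fin n → Bool) : ℝ := (List.ofFn v).foldl coinStep a

def heads {n : ℕ} (v : Fin n → Bool) : ℕ := ∑ i, if v i then 1 else 0

@[simp] lemma runProcess_cons {n : ℕ} (a : ℝ) (b : Bool) (v : Fin n → Bool) :
    runProcess a (Fin.cons b v) = runProcess (coinStep a b) v := by
  simp [runProcess, List.ofFn_succ]

lemma runProcess_castSucc {n : ℕ} (a : ℝ) (v : Fin (n + 1) → Bool) :
    runProcess a v = coinStep (runProcess a fun i => v i.castSucc) (v (Fin.last n)) := by
  rw [runProcess, List.ofFn_succ', List.concat_eq_append, List.foldl_concat, runProcess]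

lemma process_eq_runProcess {Ω : Type*} {B : ℕ → Ω → Bool} {A : ℕ → Ω → ℝ} {a0 : ℝ}
    (hA0 : ∀ ω, A 0 ω = a0) (hstep : ∀ n ω, A (n + 1) ω = coinStep (A n ω) (B (n + 1) ω))
    (n : ℕ) (ω : Ω) : A n ω = runProcess a0 fun i : Fin n => B (i + 1) ω := by
  induction n with
  | zero => simp [hA0, runProcess]
  | succ n ih => rw [hstep, ih, runProcess_castSucc]; rfl

@[simp] lemma heads_cons {n : ℕ} (b : Bool) (v : Fin n → Bool) :
    heads (Fin.cons b v : Fin (n + 1) → Bool) = (if b then 1 else 0) + heads v := by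
  rw [heads, heads, Fin.sum_univ_succ]
  simp

noncomputable def lowPaths (n : ℕ) (a β : ℝ) : Finset (Fin n → Bool) :=
  {v | runProcess a v < β * 2 ^ heads v}

lemma card_lowPaths_succ (n : ℕ) (a β : ℝ) :
    #(lowPaths (n + 1) a β) = #(lowPaths n (2 * a) (2 * β)) + #(lowPaths n (a - 1) β) := by
  simp only [lowPaths, card_filter]
  rw [← (Fin.consEquiv fun _ => Bool).sum_comp, Fintype.sum_prod_type, Fintype.sum_bool]
  congr 1 <;> refine sum_congr rfl fun v _ => ?_
  · simp [Fin.consEquiv, coinStep, pow_add, mul_comm, mul_assoc]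
  · simp [Fin.consEquiv, coinStep]

lemma min_one_step_le {u : ℝ} (hu : 0 ≤ u) :
    min 1 (2 * u ^ 2) / 2 + min 1 (2 * (√2 * u)) / 2 ≤ min 1 (2 * u) := by
  have hs : √2 ^ 2 = 2 := Real.sq_sqrt zero_le_two
  have hs_lo : 5 / 4 < √2 := by nlinarith [Real.sqrt_nonneg 2]
  have hs_hi : √2 < 3 / 2 := by nlinarith [Real.sqrt_nonneg 2]
  rcases le_total 1 (2 * u) with h | h
  · rw [min_eq_left h]
    linarith [min_le_left 1 (2 * u ^ 2), min_le_left 1 (2 * (√2 * u))]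
  rw [min_eq_right h]
  have hsq := min_le_right 1 (2 * u ^ 2)
  rcases le_total 1 (2 * (√2 * u)) with h' | h'
  · have : √2 ≤ 4 * u := by nlinarith
    nlinarith [min_le_left 1 (2 * (√2 * u))]
  · nlinarith [min_le_right 1 (2 * (√2 * u))]

noncomputable def tailBound (c : ℝ) : ℝ := min 1 (2 * 2 ^ (-(c / 2)))

lemma tailBound_nonneg (c : ℝ) : 0 ≤ tailBound c := le_min zero_le_one (by positivity)

lemma tailBound_eq_one_of_neg {c : ℝ} (hc : c < 0) : tailBound c = 1 :=
  min_eq_left (by linarith [Real.one_le_rpow one_le_two (by linarith : 0 ≤ -(c / 2))])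

lemma tailBound_step (c : ℝ) : tailBound (2 * c) / 2 + tailBound (c - 1) / 2 ≤ tailBound c := by
  have h2 : (2 : ℝ) ^ (-(2 * c / 2)) = (2 ^ (-(c / 2))) ^ 2 := by
    rw [← Real.rpow_mul_natCast zero_le_two]; ring_nf
  have h1 : (2 : ℝ) ^ (-((c - 1) / 2)) = √2 * 2 ^ (-(c / 2)) := by
    rw [Real.sqrt_eq_rpow, ← Real.rpow_add zero_lt_two]; ring_nf
  simpa only [tailBound, h1, h2] using min_one_step_le (by positivity)

lemma tailBound_le (c : ℝ) : tailBound c ≤ 2 / 2 ^ (c / 2) := by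
  rw [div_eq_mul_inv, ← Real.rpow_neg zero_le_two]
  exact min_le_right _ _

lemma card_lowPaths_le (n : ℕ) (a β : ℝ) :
    (#(lowPaths n a β) : ℝ) ≤ 2 ^ n * tailBound (a - β) := by
  induction n generalizing a β with
  | zero =>
    rcases lt_or_ge a β with h | h
    · rw [tailBound_eq_one_of_neg (by linarith)]
      simpa using card_le_univ (lowPaths 0 a β)
    · have : lowPaths 0 a β = ∅ := filter_false_of_mem fun v _ => by simpa [runProcess, heads]
      simp [this, tailBound_nonneg]
  | succ n ih =>
    have step := tailBound_step (a - β)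
    rw [card_lowPaths_succ, Nat.cast_add]
    calc _ ≤ 2 ^ n * tailBound (2 * a - 2 * β) + 2 ^ n * tailBound (a - 1 - β) :=
          add_le_add (ih _ _) (ih _ _)
      _ = 2 ^ (n + 1) * (tailBound (2 * (a - β)) / 2 + tailBound (a - β - 1) / 2) := by
          ring_nf
      _ ≤ 2 ^ (n + 1) * tailBound (a - β) := by gcongr

section FairCoins

variable {Ω ι : Type*} [MeasurableSpace Ω] {μ : Measure Ω} [IsProbabilityMeasure μ]
  {X : ι → Ω → Bool}

lemma measure_preimage_singleton_of_fair {i : ι} (hX : Measurable (X i))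
    (hfair : μ {ω | X i ω = true} = 1 / 2) (b : Bool) : μ (X i ⁻¹' {b}) = 2⁻¹ := by
  have htrue : μ (X i ⁻¹' {true}) = 2⁻¹ := by rw [← one_div, ← hfair]; rfl
  cases b
  · have hcompl : X i ⁻¹' {false} = (X i ⁻¹' {true})ᶜ := by ext; simp
    rw [hcompl, prob_compl_eq_one_sub (hX (measurableSet_singleton _)), htrue,
      ENNReal.one_sub_inv_two]
  · exact htrue

variable [Fintype ι]

lemma measure_pi_preimage_singleton_of_fair (hX : ∀ i, Measurable (X i)) (hind : iIndepFun X μ)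
    (hfair : ∀ i, μ {ω | X i ω = true} = 1 / 2) (v : ι → Bool) :
    μ ((fun ω i => X i ω) ⁻¹' {v}) = 2⁻¹ ^ Fintype.card ι := by
  have hcyl : (fun ω i => X i ω) ⁻¹' {v} = ⋂ i ∈ univ, X i ⁻¹' {v i} := by
    ext ω; simp [funext_iff]
  rw [hcyl, hind.measure_inter_preimage_eq_mul _ fun _ _ => measurableSet_singleton _]
  simp [measure_preimage_singleton_of_fair (hX _) (hfair _)]

lemma measureReal_pi_preimage_of_fair (hX : ∀ i, Measurable (X i)) (hind : iIndepFun X μ)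
    (hfair : ∀ i, μ {ω | X i ω = true} = 1 / 2) (s : Finset (ι → Bool)) :
    μ.real ((fun ω i => X i ω) ⁻¹' s) = #s / 2 ^ Fintype.card ι := by
  have hmeas : Measurable fun ω i => X i ω := measurable_pi_lambda _ hX
  rw [measureReal_def,
    ← sum_measure_preimage_singleton s fun _ _ => hmeas (measurableSet_singleton _)]
  simp [measure_pi_preimage_singleton_of_fair hX hind hfair, div_eq_mul_inv]

end FairCoins

theorem exponent_process_bound_general {Ω : Type*} [MeasurableSpace Ω] (μ : Measure Ω)
    [IsProbabilityMeasure μ]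
    (B : ℕ → Ω → Bool) (hBmeas : ∀ n, Measurable (B n))
    (hBindep : iIndepFun B μ)
    (hBhalf : ∀ n, μ {ω | B n ω = true} = 1/2)
    (A : ℕ → Ω → ℝ) (a0 : ℝ)
    (hA0 : ∀ ω, A 0 ω = a0)
    (hrec : ∀ n ω,
      (B (n+1) ω = true → A (n+1) ω = 2 * A n ω) ∧
      (B (n+1) ω = false → A (n+1) ω = A n ω - 1)) :
    ∀ β : ℝ, 0 < β → β < a0 → ∀ n : ℕ,
      (μ {ω | A n ω ≥
        β * 2 ^ (∑ i ∈ Finset.range n, (if B (i+1) ω then 1 else 0))}).toReal ≥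
      1 - 2 / (2 : ℝ) ^ ((a0 - β) / 2) := by
  intro β _ _ n
  set coins : Ω → Fin n → Bool := fun ω i => B (i + 1) ω
  have hstep (m : ℕ) (ω : Ω) : A (m + 1) ω = coinStep (A m ω) (B (m + 1) ω) := by
    cases h : B (m + 1) ω <;> simp [coinStep, (hrec m ω).1, (hrec m ω).2, h]
  have hevent : {ω | A n ω ≥ β * 2 ^ (∑ i ∈ Finset.range n, (if B (i+1) ω then 1 else 0))}
      = (coins ⁻¹' lowPaths n a0 β)ᶜ := by
    ext ω
    have hheads : heads (coins ω) = ∑ i ∈ Finset.range n, (if B (i+1) ω then 1 else 0) :=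
      Fin.sum_univ_eq_sum_range (fun i => if B (i + 1) ω then 1 else 0) n
    rw [Set.mem_ofPred_eq, ← hheads, process_eq_runProcess hA0 hstep]
    simp [lowPaths, coins]
  have hcoins : μ.real (coins ⁻¹' lowPaths n a0 β) = #(lowPaths n a0 β) / 2 ^ n := by
    simpa using measureReal_pi_preimage_of_fair (X := fun i : Fin n => B (i + 1))
      (fun _ => hBmeas _)
      (hBindep.precomp ((add_left_injective 1).comp Fin.val_injective)) (fun _ => hBhalf _)
      (lowPaths n a0 β)
  have hmeas : MeasurableSet (coins ⁻¹' lowPaths n a0 β) :=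
    measurable_pi_lambda _ (fun _ => hBmeas _) (lowPaths n a0 β).finite_toSet.measurableSet
  have hcount : (#(lowPaths n a0 β) : ℝ) / 2 ^ n ≤ tailBound (a0 - β) := by
    rw [div_le_iff₀ (by positivity), mul_comm]
    exact card_lowPaths_le n a0 β
  rw [← measureReal_def, hevent, probReal_compl_eq_one_sub hmeas, hcoins]
  linarith [tailBound_le (a0 - β)]

theorem exponent_process_bound {Ω : Type*} [MeasurableSpace Ω] (μ : Measure Ω)
    [IsProbabilityMeasure μ]
    (B : ℕ → Ω → Bool) (hBmeas : ∀ n, Measurable (B n))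
    (hBindep : iIndepFun B μ)
    (hBhalf : ∀ n, μ {ω | B n ω = true} = 1/2)
    (A : ℕ → Ω → ℝ) (a0 : ℝ) (ha0 : 0 < a0)
    (hA0 : ∀ ω, A 0 ω = a0)
    (hrec : ∀ n ω,
      (B (n+1) ω = true → A (n+1) ω = 2 * A n ω) ∧
      (B (n+1) ω = false → A (n+1) ω = A n ω - 1)) :
    ∀ β : ℝ, 0 < β → β < a0 → ∀ n : ℕ,
      (μ {ω | A n ω ≥
        β * 2 ^ (∑ i ∈ Finset.range n, (if B (i+1) ω then 1 else 0))}).toReal ≥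
      1 - 2 / (2 : ℝ) ^ ((a0 - β) / 2) :=
  exponent_process_bound_general μ B hBmeas hBindep hBhalf A a0 hA0 hrec
end

section
/- The equation $y = \frac{1}{2(2^{1/2}-1)} y^{1/2} + \frac{1}{4(2^{3/4}-1)} y^{1/4} + \frac{1}{4(2^{7/8}-1)} y^{1/8}$ has a unique solution $y^* \geq 1$ in the positive reals, and $y^* \leq 2.87$. -/
/-!
Dividing by `y` turns the right-hand side into a positive combination of `y^(-1/2)`, `y^(-3/4)`
and `y^(-7/8)`, which is strictly decreasing on `(0, ∞)`, so there is at most one positive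
solution. At `y = 1` the right-hand side is at least `1`, since already `1 / (2 (√2 - 1)) ≈ 1.21`,
and rational bounds on the fractional powers show it is at most `2.87` at `y = 2.87`; the
intermediate value theorem then gives a solution in `[1, 2.87]`.
-/

open Real Set Function

lemma rpow_pow_of_mul_eq {x p : ℝ} {m n : ℕ} (hx : 0 ≤ x) (h : p * n = m) :
    (x ^ p) ^ n = x ^ m := by
  rw [← rpow_natCast, ← rpow_mul hx, h, rpow_natCast]

lemma lt_rpow_of_pow_lt {x p l : ℝ} {m n : ℕ} (hx : 0 ≤ x) (h : p * n = m)
    (hl : l ^ n < x ^ m) : l < x ^ p :=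
  lt_of_pow_lt_pow_left₀ n (rpow_nonneg hx p) (by rwa [rpow_pow_of_mul_eq hx h])

lemma rpow_lt_of_pow_lt {x p u : ℝ} {m n : ℕ} (hx : 0 ≤ x) (hu : 0 ≤ u) (h : p * n = m)
    (hu' : x ^ m < u ^ n) : x ^ p < u :=
  lt_of_pow_lt_pow_left₀ n hu (by rwa [rpow_pow_of_mul_eq hx h])

lemma strictAntiOn_const_mul_rpow_div_self {a p : ℝ} (ha : 0 < a) (hp : p < 1) :
    StrictAntiOn (fun y : ℝ => a * y ^ p / y) (Ioi 0) := by
  intro y hy z hz hyz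
  simp only [mul_div_assoc, ← rpow_sub_one (ne_of_gt hy), ← rpow_sub_one (ne_of_gt hz)]
  exact mul_lt_mul_of_pos_left (rpow_lt_rpow_of_neg hy hyz (by linarith)) ha

lemma eq_of_isFixedPt_of_strictAntiOn_div_self {f : ℝ → ℝ}
    (hf : StrictAntiOn (fun y => f y / y) (Ioi 0)) {y y' : ℝ} (hy : 0 < y) (hy' : 0 < y')
    (hfy : IsFixedPt f y) (hfy' : IsFixedPt f y') : y = y' :=
  hf.injOn hy hy' (by simp only [hfy.eq, hfy'.eq, div_self hy.ne', div_self hy'.ne'])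

lemma eq_of_isFixedPt_rpow_add_rpow_add_rpow {a b c p q r : ℝ} (ha : 0 < a) (hb : 0 < b)
    (hc : 0 < c) (hp : p < 1) (hq : q < 1) (hr : r < 1) {y y' : ℝ} (hy : 0 < y) (hy' : 0 < y')
    (hfy : IsFixedPt (fun y => a * y ^ p + b * y ^ q + c * y ^ r) y)
    (hfy' : IsFixedPt (fun y => a * y ^ p + b * y ^ q + c * y ^ r) y') : y = y' := by
  refine eq_of_isFixedPt_of_strictAntiOn_div_self ?_ hy hy' hfy hfy'
  simp only [add_div]
  exact ((strictAntiOn_const_mul_rpow_div_self ha hp).add_antitone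
    (strictAntiOn_const_mul_rpow_div_self hb hq).antitoneOn).add_antitone
    (strictAntiOn_const_mul_rpow_div_self hc hr).antitoneOn

lemma one_div_mul_two_rpow_sub_one_pos {k e : ℝ} (hk : 0 < k) (he : 0 < e) :
    0 < 1 / (k * ((2:ℝ) ^ e - 1)) :=
  one_div_pos.2 (mul_pos hk (sub_pos.2 (one_lt_rpow one_lt_two he)))

lemma one_lt_one_div_two_mul_sqrt_two_sub_one : 1 < 1 / (2 * ((2:ℝ) ^ ((1:ℝ)/2) - 1)) := by
  have h : (2:ℝ) ^ ((1:ℝ)/2) < 1.5 :=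
    rpow_lt_of_pow_lt (m := 1) (n := 2) (by norm_num) (by norm_num) (by norm_num) (by norm_num)
  rw [lt_div_iff₀ (by linarith [one_lt_rpow one_lt_two (by norm_num : (0:ℝ) < 1/2)])]
  linarith

noncomputable def fixedPointRhs (y : ℝ) : ℝ :=
  1 / (2 * ((2:ℝ) ^ ((1:ℝ)/2) - 1)) * y ^ ((1:ℝ)/2)
    + 1 / (4 * ((2:ℝ) ^ ((3:ℝ)/4) - 1)) * y ^ ((1:ℝ)/4)
    + 1 / (4 * ((2:ℝ) ^ ((7:ℝ)/8) - 1)) * y ^ ((1:ℝ)/8)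

lemma continuous_fixedPointRhs : Continuous fixedPointRhs := by
  unfold fixedPointRhs
  fun_prop (disch := norm_num)

lemma one_le_fixedPointRhs_one : 1 ≤ fixedPointRhs 1 := by
  have ha := one_lt_one_div_two_mul_sqrt_two_sub_one
  have hb := one_div_mul_two_rpow_sub_one_pos (by norm_num : (0:ℝ) < 4) (by norm_num : (0:ℝ) < 3/4)
  have hc := one_div_mul_two_rpow_sub_one_pos (by norm_num : (0:ℝ) < 4) (by norm_num : (0:ℝ) < 7/8)
  simp only [fixedPointRhs, one_rpow, mul_one]
  linarith

lemma fixedPointRhs_two_point_eight_seven_le : fixedPointRhs 2.87 ≤ 2.87 := by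
  have h₁ : (1.41421:ℝ) < 2 ^ ((1:ℝ)/2) :=
    lt_rpow_of_pow_lt (m := 1) (n := 2) (by norm_num) (by norm_num) (by norm_num)
  have h₂ : (1.68179:ℝ) < 2 ^ ((3:ℝ)/4) :=
    lt_rpow_of_pow_lt (m := 3) (n := 4) (by norm_num) (by norm_num) (by norm_num)
  have h₃ : (1.834:ℝ) < 2 ^ ((7:ℝ)/8) :=
    lt_rpow_of_pow_lt (m := 7) (n := 8) (by norm_num) (by norm_num) (by norm_num)
  have k₁ : (2.87:ℝ) ^ ((1:ℝ)/2) < 1.69411 :=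
    rpow_lt_of_pow_lt (m := 1) (n := 2) (by norm_num) (by norm_num) (by norm_num) (by norm_num)
  have k₂ : (2.87:ℝ) ^ ((1:ℝ)/4) < 1.30158 :=
    rpow_lt_of_pow_lt (m := 1) (n := 4) (by norm_num) (by norm_num) (by norm_num) (by norm_num)
  have k₃ : (2.87:ℝ) ^ ((1:ℝ)/8) < 1.14087 :=
    rpow_lt_of_pow_lt (m := 1) (n := 8) (by norm_num) (by norm_num) (by norm_num) (by norm_num)
  calc fixedPointRhs 2.87
      ≤ 1 / (2 * ((1.41421:ℝ) - 1)) * 1.69411 + 1 / (4 * (1.68179 - 1)) * 1.30158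
        + 1 / (4 * (1.834 - 1)) * 1.14087 := by
        unfold fixedPointRhs
        gcongr
    _ ≤ 2.87 := by norm_num

lemma eq_of_isFixedPt_fixedPointRhs {y y' : ℝ} (hy : 0 < y) (hy' : 0 < y')
    (hfy : IsFixedPt fixedPointRhs y) (hfy' : IsFixedPt fixedPointRhs y') : y = y' :=
  eq_of_isFixedPt_rpow_add_rpow_add_rpow
    (one_div_mul_two_rpow_sub_one_pos two_pos (by norm_num))
    (one_div_mul_two_rpow_sub_one_pos four_pos (by norm_num))
    (one_div_mul_two_rpow_sub_one_pos four_pos (by norm_num))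
    (by norm_num) (by norm_num) (by norm_num) hy hy' hfy hfy'

theorem fixed_point_bound :
    ∃ y : ℝ, 0 < y ∧
      y = 1 / (2 * ((2:ℝ)^((1:ℝ)/2) - 1)) * y ^ ((1:ℝ)/2)
        + 1 / (4 * ((2:ℝ)^((3:ℝ)/4) - 1)) * y ^ ((1:ℝ)/4)
        + 1 / (4 * ((2:ℝ)^((7:ℝ)/8) - 1)) * y ^ ((1:ℝ)/8) ∧
      1 ≤ y ∧ y ≤ 2.87 ∧
      ∀ y' : ℝ, 0 < y' →
        y' = 1 / (2 * ((2:ℝ)^((1:ℝ)/2) - 1)) * y' ^ ((1:ℝ)/2)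
          + 1 / (4 * ((2:ℝ)^((3:ℝ)/4) - 1)) * y' ^ ((1:ℝ)/4)
          + 1 / (4 * ((2:ℝ)^((7:ℝ)/8) - 1)) * y' ^ ((1:ℝ)/8) → y' = y := by
  obtain ⟨y, ⟨hy₁, hy₂⟩, hy⟩ := exists_mem_Icc_isFixedPt continuous_fixedPointRhs.continuousOn
    (by norm_num) one_le_fixedPointRhs_one fixedPointRhs_two_point_eight_seven_le
  have hy₀ : 0 < y := zero_lt_one.trans_le hy₁
  exact ⟨y, hy₀, hy.symm, hy₁, hy₂, fun y' hy' hfy' =>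
    eq_of_isFixedPt_fixedPointRhs hy' hy₀ hfy'.symm hy⟩
end

section
/- Let $(B_n)_{n\geq 1}$ be i.i.d. Bernoulli(1/2) and define the process $E_n$ by $E_0 = e_0 \in [0,1]$, $E_{n+1} = E_n^2$ if $B_{n+1}=1$ and $E_{n+1} = E_n\sqrt{2-E_n^2}$ if $B_{n+1}=0$. Then for every $n$, $\mathbb{P}\big(E_n \geq 1 - 2^{-2^{\sum_{i=1}^n (1-B_i)}}\big) \geq 1 - 2\sqrt{2}\sqrt{1-e_0^2}$. -/
/-!
Write `D = 1 - E ^ 2`. A plus step `E ↦ E ^ 2` at most doubles `D` and a minus step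
`E ↦ E √(2 - E ^ 2)` squares it, so `D n ≤ 2 ^ (-x n)` for the walk `x` started at
`x 0 = -log₂ (D 0)` that moves `x ↦ x - 1` on plus steps and `x ↦ 2 x` on minus steps. The walk
is affine in its starting point: shifting the start by `1` shifts `x n` by `2 ^ S n`, where `S n`
counts the minus steps. Hence `E n ≥ E n ^ 2 ≥ 1 - 2 ^ (-2 ^ S n)` as soon as the walk started at
`x 0 - 1` ends nonnegative. The function `potential a = min 1 (2 * 2 ^ (-a / 2))` equals `1` for
`a < 0` and satisfies `potential (a - 1) + potential (2 * a) ≤ 2 * potential a`, so by induction on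
the number of fair coin flips the walk started at `a` ends negative with probability at most
`potential a`, which is `2 √2 √(D 0)` for `a = x 0 - 1`.
-/

open MeasureTheory ProbabilityTheory

namespace ExtremalProcess

open Finset

def walkStep (a : ℝ) : Bool → ℝ
  | true => a - 1
  | false => 2 * a

def walk (a : ℝ) {n : ℕ} (v : Fin n → Bool) : ℝ :=
  (List.ofFn v).foldl walkStep a

@[simp] lemma walk_zero (a : ℝ) (v : Fin 0 → Bool) : walk a v = a := rfl

lemma walk_succ (a : ℝ) {n : ℕ} (v : Fin (n + 1) → Bool) :
    walk a v = walk (walkStep a (v 0)) (Fin.tail v) := by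
  simp only [walk, List.ofFn_succ, List.foldl_cons]
  rfl

lemma walk_succ' (a : ℝ) {n : ℕ} (v : Fin (n + 1) → Bool) :
    walk a v = walkStep (walk a (Fin.init v)) (v (Fin.last n)) := by
  simp only [walk, List.ofFn_succ', List.concat_eq_append, List.foldl_concat]
  rfl

lemma walk_add (a c : ℝ) {n : ℕ} (v : Fin n → Bool) :
    walk (a + c) v = walk a v + 2 ^ (∑ i, if v i then 0 else 1 : ℕ) * c := by
  induction n with
  | zero => simp
  | succ n ih =>
    rw [walk_succ', walk_succ', ih, Fin.sum_univ_castSucc]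
    change walkStep _ _ = walkStep _ _ + 2 ^ (∑ i, (if Fin.init v i then 0 else 1 : ℕ) + _) * c
    cases v (Fin.last n)
    · simp only [walkStep, Bool.false_eq_true, if_false, pow_succ]
      ring
    · simp only [walkStep, if_true, add_zero]
      ring

noncomputable def potential (a : ℝ) : ℝ := min 1 (2 * 2 ^ (-a / 2))

lemma potential_nonneg (a : ℝ) : 0 ≤ potential a := le_min zero_le_one (by positivity)

lemma one_sub_potential_le (a : ℝ) : 1 - potential a ≤ if 0 ≤ a then 1 else 0 := by
  split_ifs with ha
  · linarith [potential_nonneg a]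
  · have hpow : 1 ≤ (2 : ℝ) ^ (-a / 2) := Real.one_le_rpow (by norm_num) (by linarith)
    have hpot : potential a = 1 := min_eq_left (by linarith)
    linarith

lemma min_one_add_min_one_le {t : ℝ} (ht : 0 ≤ t) :
    min 1 (2 * (√2 * t)) + min 1 (2 * t ^ 2) ≤ 2 * min 1 (2 * t) := by
  have hs : √2 ^ 2 = 2 := Real.sq_sqrt zero_le_two
  have hs1 : 1 < √2 := by rw [Real.lt_sqrt zero_le_one]; norm_num
  rcases le_total 1 (2 * t) with h | h
  · rw [min_eq_left h]; linarith [min_le_left 1 (2 * (√2 * t)), min_le_left 1 (2 * t ^ 2)]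
  rw [min_eq_right h]
  rcases le_total (2 * (√2 * t)) 1 with h' | h'
  · rw [min_eq_right h']
    nlinarith [min_le_right 1 (2 * t ^ 2)]
  · rw [min_eq_left h']
    nlinarith [min_le_right 1 (2 * t ^ 2)]

lemma sum_potential_walkStep_le (a : ℝ) : ∑ b, potential (walkStep a b) ≤ 2 * potential a := by
  set t : ℝ := 2 ^ (-a / 2)
  have ht : 0 ≤ t := by positivity
  have hsub : (2 : ℝ) ^ (-(a - 1) / 2) = √2 * t := by
    rw [show -(a - 1) / 2 = 1 / 2 + -a / 2 by ring, Real.rpow_add two_pos, ← Real.sqrt_eq_rpow]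
  have hmul : (2 : ℝ) ^ (-(2 * a) / 2) = t ^ 2 := by
    rw [← Real.rpow_natCast, ← Real.rpow_mul zero_le_two]; ring_nf
  simp only [Fintype.sum_bool, potential, walkStep]
  rw [hsub, hmul]
  exact min_one_add_min_one_le ht

lemma card_filter_succ {α : Type*} [Fintype α] {n : ℕ} (P : (Fin (n + 1) → α) → Prop)
    [DecidablePred P] :
    (#{v | P v} : ℝ) = ∑ b, (#{w : Fin n → α | P (Fin.cons b w)} : ℝ) := by
  simp only [card_filter, Nat.cast_sum]
  rw [← (Fin.consEquiv fun _ => α).sum_comp, Fintype.sum_prod_type]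
  rfl

lemma card_walk_nonneg_ge (n : ℕ) (a : ℝ) :
    2 ^ n * (1 - potential a) ≤ #{v : Fin n → Bool | 0 ≤ walk a v} := by
  induction n generalizing a with
  | zero =>
    have := one_sub_potential_le a
    split_ifs at this with ha <;> simp [ha, this]
  | succ n ih =>
    rw [card_filter_succ]
    simp only [walk_succ, Fin.cons_zero, Fin.tail_cons]
    calc (2 : ℝ) ^ (n + 1) * (1 - potential a)
        ≤ ∑ b, 2 ^ n * (1 - potential (walkStep a b)) := by
          have h := sum_potential_walkStep_le a
          rw [Fintype.sum_bool] at h ⊢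
          rw [pow_succ]
          nlinarith [pow_pos (zero_lt_two' ℝ) n]
      _ ≤ _ := sum_le_sum fun b _ => ih _

section FairCoins

variable {Ω ι : Type*} [MeasurableSpace Ω] {μ : Measure Ω} [IsProbabilityMeasure μ]

lemma measure_preimage_singleton_eq_half {Y : Ω → Bool} (hY : Measurable Y)
    (hfair : μ {ω | Y ω = true} = 1 / 2) (c : Bool) : μ (Y ⁻¹' {c}) = 1 / 2 := by
  cases c with
  | true => exact hfair
  | false =>
    have hcompl : Y ⁻¹' {false} = {ω | Y ω = true}ᶜ := by ext; simp
    rw [hcompl, prob_compl_eq_one_sub (measurableSet_eq_fun hY measurable_const), hfair,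
      one_div, ENNReal.one_sub_inv_two]

variable [Fintype ι] {X : ι → Ω → Bool}

lemma measure_tuple_eq (hX : ∀ i, Measurable (X i)) (hind : iIndepFun X μ)
    (hfair : ∀ i, μ {ω | X i ω = true} = 1 / 2) (v : ι → Bool) :
    μ {ω | (fun i => X i ω) = v} = (1 / 2) ^ Fintype.card ι := by
  have hcyl : {ω | (fun i => X i ω) = v} = ⋂ i ∈ (univ : Finset ι), X i ⁻¹' {v i} := by
    ext ω; simp [funext_iff]
  rw [hcyl, hind.measure_inter_preimage_eq_mul univ fun i _ => measurableSet_singleton (v i)]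
  simp [measure_preimage_singleton_eq_half (hX _) (hfair _)]

lemma measure_tuple_mem (hX : ∀ i, Measurable (X i)) (hind : iIndepFun X μ)
    (hfair : ∀ i, μ {ω | X i ω = true} = 1 / 2) (S : Finset (ι → Bool)) :
    μ ((fun ω i => X i ω) ⁻¹' S) = #S * (1 / 2) ^ Fintype.card ι := by
  have hmeas : Measurable fun ω i => X i ω := measurable_pi_lambda _ hX
  rw [← sum_measure_preimage_singleton S fun v _ => hmeas (measurableSet_singleton v)]
  simp only [Set.preimage, Set.mem_singleton_iff, measure_tuple_eq hX hind hfair, sum_const,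
    nsmul_eq_mul]

end FairCoins

lemma one_sub_potential_le_measure_walk_nonneg {Ω : Type*} [MeasurableSpace Ω] {μ : Measure Ω}
    [IsProbabilityMeasure μ] {n : ℕ} {X : Fin n → Ω → Bool} (hX : ∀ i, Measurable (X i))
    (hind : iIndepFun X μ) (hfair : ∀ i, μ {ω | X i ω = true} = 1 / 2) (a : ℝ) :
    1 - potential a ≤ (μ {ω | 0 ≤ walk a fun i => X i ω}).toReal := by
  have hset : {ω | 0 ≤ walk a fun i => X i ω} =
      (fun ω i => X i ω) ⁻¹' ↑(univ.filter fun v : Fin n → Bool => 0 ≤ walk a v) := by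
    ext; simp
  rw [hset, measure_tuple_mem hX hind hfair, Fintype.card_fin, ENNReal.toReal_mul,
    ENNReal.toReal_pow]
  have := card_walk_nonneg_ge n a
  rw [← le_div_iff₀' (by positivity)] at this
  simpa [div_eq_mul_inv] using this

lemma potential_neg_logb_sub_one_le {D : ℝ} (hD : 0 < D) :
    potential (-Real.logb 2 D - 1) ≤ 2 * √2 * √D := by
  have hexp : (2 : ℝ) ^ (-(-Real.logb 2 D - 1) / 2) = √2 * √D := by
    rw [show -(-Real.logb 2 D - 1) / 2 = 1 / 2 + Real.logb 2 D * (1 / 2) by ring,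
      Real.rpow_add two_pos, Real.rpow_mul zero_le_two, Real.rpow_logb two_pos (by norm_num) hD,
      ← Real.sqrt_eq_rpow, ← Real.sqrt_eq_rpow]
  calc potential (-Real.logb 2 D - 1) ≤ 2 * (√2 * √D) := hexp ▸ min_le_right _ _
    _ = 2 * √2 * √D := by ring

def IsExtremalPath (b : ℕ → Bool) (e : ℕ → ℝ) : Prop :=
  ∀ n, (b (n + 1) = true → e (n + 1) = e n ^ 2) ∧
    (b (n + 1) = false → e (n + 1) = e n * √(2 - e n ^ 2))

lemma one_sub_sq_mul_sqrt_two_sub_sq {x : ℝ} (hx : x ^ 2 ≤ 2) :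
    1 - (x * √(2 - x ^ 2)) ^ 2 = (1 - x ^ 2) ^ 2 := by
  rw [mul_pow, Real.sq_sqrt (by linarith)]; ring

namespace IsExtremalPath

variable {b : ℕ → Bool} {e : ℕ → ℝ}

lemma eq_one (h : IsExtremalPath b e) (h0 : e 0 = 1) (n : ℕ) : e n = 1 := by
  induction n with
  | zero => exact h0
  | succ n ih =>
    cases hb : b (n + 1)
    · rw [(h n).2 hb, ih]; norm_num
    · rw [(h n).1 hb, ih]; norm_num

lemma mem_Icc_and_one_sub_sq_le (h : IsExtremalPath b e) (h0 : e 0 ∈ Set.Icc 0 1) {x : ℝ}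
    (hx : 1 - e 0 ^ 2 ≤ 2 ^ (-x)) (n : ℕ) :
    e n ∈ Set.Icc 0 1 ∧ 1 - e n ^ 2 ≤ 2 ^ (-walk x fun i : Fin n => b (i + 1)) := by
  induction n with
  | zero => exact ⟨h0, hx⟩
  | succ n ih =>
    obtain ⟨⟨he0, he1⟩, hD⟩ := ih
    rw [walk_succ']
    set w := walk x fun i : Fin n => b (i + 1)
    change e (n + 1) ∈ _ ∧ 1 - e (n + 1) ^ 2 ≤ 2 ^ (-walkStep w (b (n + 1)))
    have hsq : e n ^ 2 ≤ 1 := pow_le_one₀ he0 he1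
    cases hb : b (n + 1)
    · have hminus := one_sub_sq_mul_sqrt_two_sub_sq (x := e n) (by linarith)
      rw [(h n).2 hb]
      refine ⟨⟨by positivity, (sq_le_one_iff₀ (by positivity)).1 (by nlinarith)⟩, ?_⟩
      calc 1 - (e n * √(2 - e n ^ 2)) ^ 2 = (1 - e n ^ 2) ^ 2 := hminus
        _ ≤ (2 ^ (-w)) ^ 2 := pow_le_pow_left₀ (by linarith) hD 2
        _ = 2 ^ (-walkStep w false) := by
          rw [← Real.rpow_natCast, ← Real.rpow_mul zero_le_two, walkStep]
          ring_nf
    · rw [(h n).1 hb]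
      refine ⟨⟨by positivity, pow_le_one₀ he0 he1⟩, ?_⟩
      calc 1 - (e n ^ 2) ^ 2 ≤ 2 * (1 - e n ^ 2) := by nlinarith
        _ ≤ 2 * 2 ^ (-w) := by linarith
        _ = 2 ^ (-walkStep w true) := by
          rw [walkStep, neg_sub, sub_eq_add_neg, Real.rpow_add two_pos, Real.rpow_one]

lemma one_sub_rpow_le (h : IsExtremalPath b e) (h0 : e 0 ∈ Set.Icc 0 1) (hD : 0 < 1 - e 0 ^ 2)
    {n : ℕ} (hw : 0 ≤ walk (-Real.logb 2 (1 - e 0 ^ 2) - 1) fun i : Fin n => b (i + 1)) :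
    1 - (2 : ℝ) ^ (-((2 : ℝ) ^ (∑ i ∈ range n, (if b (i + 1) then 0 else 1 : ℕ)))) ≤ e n := by
  set x := -Real.logb 2 (1 - e 0 ^ 2)
  have hx : 1 - e 0 ^ 2 ≤ 2 ^ (-x) := by rw [neg_neg, Real.rpow_logb two_pos (by norm_num) hD]
  obtain ⟨⟨he0, he1⟩, hle⟩ := h.mem_Icc_and_one_sub_sq_le h0 hx n
  have hwalk : (2 : ℝ) ^ (∑ i ∈ range n, (if b (i + 1) then 0 else 1 : ℕ)) ≤
      walk x fun i : Fin n => b (i + 1) := by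
    have := walk_add (x - 1) 1 fun i : Fin n => b (i + 1)
    rw [sub_add_cancel, mul_one, Fin.sum_univ_eq_sum_range (fun i => if b (i + 1) then 0 else 1)]
      at this
    linarith
  calc 1 - (2 : ℝ) ^ (-((2 : ℝ) ^ (∑ i ∈ range n, (if b (i + 1) then 0 else 1 : ℕ))))
      ≤ 1 - 2 ^ (-walk x fun i : Fin n => b (i + 1)) := by
        gcongr
        norm_num
    _ ≤ e n ^ 2 := by linarith
    _ ≤ e n := by nlinarith

end IsExtremalPath
end ExtremalProcess

open ExtremalProcess

theorem E_process_close_to_one {Ω : Type*} [MeasurableSpace Ω] (μ : Measure Ω)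
    [IsProbabilityMeasure μ]
    (B : ℕ → Ω → Bool) (hBmeas : ∀ n, Measurable (B n))
    (hBindep : iIndepFun B μ)
    (hBhalf : ∀ n, μ {ω | B n ω = true} = 1/2)
    (E : ℕ → Ω → ℝ) (e0 : ℝ) (he0 : e0 ∈ Set.Icc (0:ℝ) 1)
    (hE0 : ∀ ω, E 0 ω = e0)
    (hrec : ∀ n ω,
      (B (n+1) ω = true → E (n+1) ω = (E n ω)^2) ∧
      (B (n+1) ω = false → E (n+1) ω = E n ω * Real.sqrt (2 - (E n ω)^2))) :
    ∀ n : ℕ,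
      (μ {ω | E n ω ≥ 1 -
        (2:ℝ) ^ (-((2:ℝ) ^ (∑ i ∈ Finset.range n, (if B (i+1) ω then 0 else 1 : ℕ))))}).toReal ≥
      1 - 2 * Real.sqrt 2 * Real.sqrt (1 - e0^2) := by
  intro n
  have hpath (ω : Ω) : IsExtremalPath (B · ω) (E · ω) := fun k => hrec k ω
  rcases he0.2.eq_or_lt with rfl | he0_lt
  · have hall : ∀ ω, E n ω ≥ 1 - (2:ℝ) ^ (-((2:ℝ) ^
        (∑ i ∈ Finset.range n, (if B (i+1) ω then 0 else 1 : ℕ)))) := fun ω => by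
      rw [(hpath ω).eq_one (hE0 ω) n]
      exact sub_le_self _ (by positivity)
    simp [hall]
  have hD : 0 < 1 - e0 ^ 2 := by nlinarith [he0.1]
  have hgood : {ω | 0 ≤ walk (-Real.logb 2 (1 - e0 ^ 2) - 1) fun i : Fin n => B (i + 1) ω} ⊆
      {ω | E n ω ≥ 1 - (2:ℝ) ^ (-((2:ℝ) ^
        (∑ i ∈ Finset.range n, (if B (i+1) ω then 0 else 1 : ℕ))))} := fun ω hω =>
    (hpath ω).one_sub_rpow_le (hE0 ω ▸ he0) (hE0 ω ▸ hD) (by rwa [hE0 ω])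
  have hprob := one_sub_potential_le_measure_walk_nonneg (μ := μ)
    (X := fun i : Fin n => B (i + 1)) (fun i => hBmeas _)
    (hBindep.precomp fun i j hij => Fin.ext (Nat.succ_injective hij)) (fun i => hBhalf _)
    (-Real.logb 2 (1 - e0 ^ 2) - 1)
  calc _ ≥ (μ _).toReal := ENNReal.toReal_mono (measure_ne_top μ _) (measure_mono hgood)
    _ ≥ 1 - potential (-Real.logb 2 (1 - e0 ^ 2) - 1) := hprob
    _ ≥ _ := by linarith [potential_neg_logb_sub_one_le hD]
end

section
/- Let $(B_n)$ be i.i.d. Bernoulli(1/2), $Z_n^u$ the process with $Z_0^u = z_0 \in (0,1)$, $Z_{n+1}^u = (Z_n^u)^2$ if $B_{n+1}=1$, $Z_{n+1}^u = 2Z_n^u$ if $B_{n+1}=0$, and $E(n,x)$ the binomial tail threshold satisfying $\sum_{i=E(n,x)}^n \binom{n}{i} \leq 2^n x \leq \sum_{i=E(n,x)-1}^n \binom{n}{i}$. Then for every $x \in (0,1)$ and $n$, $\mathbb{P}\big(Z_n^u \leq 2^{-2^{E(n,x)}}\big) \geq x - 2\sqrt{2}\sqrt{z_0} - \binom{n}{E(n,x)-1}2^{-n}$.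 -/
/-!
Write `L = -log₂ Z`. A head doubles `L` and a tail lowers it by one, so after the bits
`b₁, …, bₙ` we have `L = 2^c (L₀ - T)`, where `c` is the number of heads and
`T = ∑_{bₖ tail} 2^{-(number of heads before k)}`. Hence `Zₙ ≤ 2^{-2^E}` as soon as `c ≥ E` and
`T ≤ L₀ - 1`. The first event has probability `2^{-n} ∑_{i ≥ E} C(n,i) ≥ x - C(n, E-1) 2^{-n}`.
Since `T` is `T'/2` or `1 + T'` according to the first bit, induction on `n` gives
`P(T > u) ≤ min 1 (2 ⬝ 2^{-u/2})`, which is `2√2√z₀` at `u = L₀ - 1`.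
-/

open MeasureTheory ProbabilityTheory Finset

namespace UpperProcess

/-- The effect of one bit on `-log₂ Z`. -/
def logStep : Bool → ℝ → ℝ
  | true, l => 2 * l
  | false, l => l - 1

def logProc {n : ℕ} (v : Fin n → Bool) (l : ℝ) : ℝ :=
  Fin.foldl n (fun l i => logStep (v i) l) l

def numHeads {n : ℕ} (v : Fin n → Bool) : ℕ :=
  ∑ i, (v i).toNat

noncomputable def deficit {n : ℕ} (v : Fin n → Bool) : ℝ :=
  Fin.foldr n (fun i t => if v i then t / 2 else 1 + t) 0

variable {n : ℕ}

lemma logProc_cons (b : Bool) (v : Fin n → Bool) (l : ℝ) :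
    logProc (Fin.cons b v) l = logProc v (logStep b l) := by
  simp [logProc, Fin.foldl_succ]

lemma logProc_succ (v : Fin (n + 1) → Bool) (l : ℝ) :
    logProc v l = logStep (v (Fin.last n)) (logProc (fun i => v i.castSucc) l) :=
  Fin.foldl_succ_last _ _

lemma numHeads_cons (b : Bool) (v : Fin n → Bool) :
    numHeads (Fin.cons b v) = numHeads v + b.toNat := by
  simp [numHeads, Fin.sum_univ_succ, add_comm]

lemma deficit_cons (b : Bool) (v : Fin n → Bool) :
    deficit (Fin.cons b v) = if b then deficit v / 2 else 1 + deficit v := by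
  simp [deficit, Fin.foldr_succ]

lemma numHeads_le (v : Fin n → Bool) : numHeads v ≤ n := by
  simpa [numHeads] using
    sum_le_card_nsmul univ (fun i => (v i).toNat) 1 fun i _ => Bool.toNat_le _

theorem logProc_eq (v : Fin n → Bool) (l : ℝ) :
    logProc v l = 2 ^ numHeads v * (l - deficit v) := by
  induction n generalizing l with
  | zero => simp [logProc, numHeads, deficit]
  | succ n ih =>
    induction v using Fin.consCases with
    | _ b v =>
      rw [logProc_cons, ih, numHeads_cons, deficit_cons]
      cases b <;> simp [logStep] <;> ring

lemma card_filter_fin_succ {α : Type*} [Fintype α] (P : (Fin (n + 1) → α) → Prop)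
    [DecidablePred P] :
    #{v | P v} = ∑ a, #{v : Fin n → α | P (Fin.cons a v)} := by
  simp only [card_filter]
  rw [← Fintype.sum_prod_type']
  exact (Fintype.sum_equiv (Fin.consEquiv fun _ => α) _ _ fun _ => rfl).symm

theorem card_numHeads_eq (k : ℕ) : #{v : Fin n → Bool | numHeads v = k} = n.choose k := by
  induction n generalizing k with
  | zero => cases k <;> simp [numHeads]
  | succ n ih =>
    rw [card_filter_fin_succ, Fintype.sum_bool]
    simp only [numHeads_cons, Bool.toNat_true, Bool.toNat_false, add_zero]
    cases k with
    | zero => simp [ih]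
    | succ k => simp only [Nat.add_right_cancel_iff, ih, Nat.choose_succ_succ]

theorem card_le_numHeads (E : ℕ) :
    #{v : Fin n → Bool | E ≤ numHeads v} = ∑ k ∈ Icc E n, n.choose k := by
  rw [card_eq_sum_card_fiberwise (t := Icc E n) (f := numHeads)]
  · refine sum_congr rfl fun k hk => ?_
    rw [← card_numHeads_eq, filter_filter]
    congr 1
    refine filter_congr fun v _ => ?_
    have := (mem_Icc.1 hk).1
    constructor <;> intro h <;> omega
  · intro v hv
    simp only [coe_filter, mem_univ, true_and, coe_Icc] at hv ⊢
    exact ⟨hv, numHeads_le v⟩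

lemma sum_Icc_pred_choose_le (E : ℕ) :
    ∑ k ∈ Icc (E - 1) n, n.choose k ≤ n.choose (E - 1) + #{v : Fin n → Bool | E ≤ numHeads v} := by
  rw [← card_le_numHeads, ← card_numHeads_eq]
  refine (card_le_card fun v => ?_).trans (card_union_le _ _)
  simp only [mem_filter, mem_univ, true_and, mem_union]
  omega

/-- The bounds of `card_lt_deficit_le` at `2u` and `u - 1`, written with `t = 2^{-u/2}`. -/
lemma min_one_add_min_one_le {t : ℝ} (ht : 0 ≤ t) :
    min 1 (2 * t ^ 2) + min 1 (2 * √2 * t) ≤ 2 * min 1 (2 * t) := by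
  have hs : √2 ^ 2 = 2 := Real.sq_sqrt zero_le_two
  have hs₁ : 1.4 ≤ √2 := Real.le_sqrt_of_sq_le (by norm_num)
  have hs₂ : √2 ≤ 1.5 := Real.sqrt_le_iff.2 ⟨by norm_num, by norm_num⟩
  rcases le_total 1 (2 * t) with h | h
  · rw [min_eq_left h]
    linarith [min_le_left 1 (2 * t ^ 2), min_le_left 1 (2 * √2 * t)]
  rw [min_eq_right h]
  rcases le_total 1 (2 * √2 * t) with h' | h'
  · nlinarith [min_le_right 1 (2 * t ^ 2), min_le_left 1 (2 * √2 * t)]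
  · nlinarith [min_le_right 1 (2 * t ^ 2), min_le_right 1 (2 * √2 * t)]

theorem card_lt_deficit_le (u : ℝ) :
    (#{v : Fin n → Bool | u < deficit v} : ℝ) ≤ 2 ^ n * min 1 (2 * 2 ^ (-u / 2)) := by
  induction n generalizing u with
  | zero =>
    rcases lt_or_ge u 0 with hu | hu
    · have : (1 : ℝ) ≤ 2 * 2 ^ (-u / 2) := by
        nlinarith [Real.one_le_rpow (x := 2) one_le_two (z := -u / 2) (by linarith)]
      simp [deficit, hu, this]
    · simp [deficit, hu.not_gt]
      positivity
  | succ n ih =>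
    rw [card_filter_fin_succ, Fintype.sum_bool]
    simp only [deficit_cons, if_true, Bool.false_eq_true, if_false]
    have htrue : #{v : Fin n → Bool | u < deficit v / 2} =
        #{v : Fin n → Bool | 2 * u < deficit v} := by
      congr 1; exact filter_congr fun v _ => by constructor <;> intro h <;> linarith
    have hfalse : #{v : Fin n → Bool | u < 1 + deficit v} =
        #{v : Fin n → Bool | u - 1 < deficit v} := by
      congr 1; exact filter_congr fun v _ => by constructor <;> intro h <;> linarith
    set t : ℝ := 2 ^ (-u / 2)
    have ht : 0 ≤ t := by positivity
    have h2u : (2 : ℝ) ^ (-(2 * u) / 2) = t ^ 2 := by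
      rw [← Real.rpow_natCast, ← Real.rpow_mul zero_le_two]; ring_nf
    have hu1 : (2 : ℝ) ^ (-(u - 1) / 2) = √2 * t := by
      rw [Real.sqrt_eq_rpow, ← Real.rpow_add two_pos]; ring_nf
    push_cast
    rw [htrue, hfalse]
    have := add_le_add (ih (2 * u)) (ih (u - 1))
    rw [h2u, hu1, ← mul_add, ← mul_assoc] at this
    calc _ ≤ _ := this
      _ ≤ 2 ^ n * (2 * min 1 (2 * t)) := by gcongr; exact min_one_add_min_one_le ht
      _ = _ := by ring

section FairBits

variable {Ω ι : Type*} [MeasurableSpace Ω] {μ : Measure Ω} [IsProbabilityMeasure μ]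

lemma measure_preimage_singleton_of_fair {X : Ω → Bool} (hX : Measurable X)
    (hhalf : μ {ω | X ω = true} = 1 / 2) (b : Bool) : μ (X ⁻¹' {b}) = 2⁻¹ := by
  have hm : MeasurableSet {ω | X ω = true} := hX (measurableSet_singleton true)
  cases b
  · have : X ⁻¹' {false} = {ω | X ω = true}ᶜ := by ext; simp
    rw [this, prob_compl_eq_one_sub hm, hhalf, one_div, ENNReal.one_sub_inv_two]
  · rw [← one_div, ← hhalf]
    rfl

variable {B : ι → Ω → Bool} {σ : Fin n → ι}

lemma measure_tuple_eq (hBmeas : ∀ i, Measurable (B i)) (hBindep : iIndepFun B μ)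
    (hBhalf : ∀ i, μ {ω | B i ω = true} = 1 / 2) (hσ : σ.Injective) (v : Fin n → Bool) :
    μ {ω | (fun i => B (σ i) ω) = v} = 2⁻¹ ^ n := by
  have : {ω | (fun i => B (σ i) ω) = v} = ⋂ i, B (σ i) ⁻¹' {v i} := by
    ext; simp [funext_iff]
  rw [this, (hBindep.precomp hσ).meas_iInter fun i => ⟨{v i}, measurableSet_singleton _, rfl⟩]
  simp [measure_preimage_singleton_of_fair (hBmeas _) (hBhalf _)]

lemma measureReal_tuple_mem (hBmeas : ∀ i, Measurable (B i)) (hBindep : iIndepFun B μ)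
    (hBhalf : ∀ i, μ {ω | B i ω = true} = 1 / 2) (hσ : σ.Injective) (S : Finset (Fin n → Bool)) :
    μ.real {ω | (fun i => B (σ i) ω) ∈ S} = #S / 2 ^ n := by
  have : {ω | (fun i => B (σ i) ω) ∈ S} = ⋃ v ∈ S, {ω | (fun i => B (σ i) ω) = v} := by
    ext; simp
  rw [measureReal_def, this, measure_biUnion_finset, sum_congr rfl fun v _ =>
    measure_tuple_eq hBmeas hBindep hBhalf hσ v]
  · simp [div_eq_mul_inv]
  · exact fun v _ w _ hvw => Set.disjoint_left.2 fun ω h h' => hvw (h.symm.trans h')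
  · exact fun v _ => measurableSet_eq_fun (by fun_prop) measurable_const

end FairBits

lemma pow_le_logProc {E : ℕ} {v : Fin n → Bool} {l : ℝ} (hE : E ≤ numHeads v)
    (hl : deficit v ≤ l - 1) : (2 : ℝ) ^ E ≤ logProc v l := by
  rw [logProc_eq]
  calc (2 : ℝ) ^ E ≤ 2 ^ numHeads v := pow_le_pow_right₀ one_le_two hE
    _ ≤ 2 ^ numHeads v * (l - deficit v) := le_mul_of_one_le_right (by positivity) (by linarith)

lemma upper_process_eq {Ω : Type*} {B : ℕ → Ω → Bool} {Zu : ℕ → Ω → ℝ} {z0 : ℝ} (hz0 : 0 < z0)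
    (hZ0 : ∀ ω, Zu 0 ω = z0)
    (hrec : ∀ n ω,
      (B (n+1) ω = true → Zu (n+1) ω = (Zu n ω)^2) ∧
      (B (n+1) ω = false → Zu (n+1) ω = 2 * Zu n ω)) (ω : Ω) (n : ℕ) :
    Zu n ω = 2 ^ (-logProc (fun i : Fin n => B (i + 1) ω) (-Real.logb 2 z0)) := by
  induction n with
  | zero => simp [logProc, hZ0, Real.rpow_logb two_pos (by norm_num) hz0]
  | succ n ih =>
    rw [logProc_succ]
    simp only [Fin.val_last, Fin.val_castSucc]
    cases hB : B (n + 1) ω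
    · rw [(hrec n ω).2 hB, ih, logStep, neg_sub, sub_eq_add_neg, Real.rpow_add two_pos,
        Real.rpow_one]
    · rw [(hrec n ω).1 hB, ih, logStep, ← Real.rpow_natCast, ← Real.rpow_mul zero_le_two]
      ring_nf

lemma upper_process_le_of_le_numHeads {Ω : Type*} {B : ℕ → Ω → Bool} {Zu : ℕ → Ω → ℝ}
    {z0 : ℝ} (hz0 : 0 < z0) (hZ0 : ∀ ω, Zu 0 ω = z0)
    (hrec : ∀ n ω,
      (B (n+1) ω = true → Zu (n+1) ω = (Zu n ω)^2) ∧
      (B (n+1) ω = false → Zu (n+1) ω = 2 * Zu n ω)) {ω : Ω} {n E : ℕ}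
    (hE : E ≤ numHeads fun i : Fin n => B (i + 1) ω)
    (hT : deficit (fun i : Fin n => B (i + 1) ω) ≤ -Real.logb 2 z0 - 1) :
    Zu n ω ≤ (2 : ℝ) ^ (-(2 : ℝ) ^ E) := by
  rw [upper_process_eq hz0 hZ0 hrec, ← Real.rpow_natCast]
  exact Real.rpow_le_rpow_of_exponent_le one_le_two
    (neg_le_neg (by exact_mod_cast pow_le_logProc hE hT))

lemma card_lt_deficit_le_sqrt {z : ℝ} (hz : 0 < z) :
    (#{v : Fin n → Bool | -Real.logb 2 z - 1 < deficit v} : ℝ) ≤ 2 ^ n * (2 * √2 * √z) := by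
  have hbound : 2 * (2 : ℝ) ^ (-(-Real.logb 2 z - 1) / 2) = 2 * √2 * √z := by
    rw [show -(-Real.logb 2 z - 1) / 2 = (Real.logb 2 z + 1) * (1 / 2) by ring,
      Real.rpow_mul zero_le_two, Real.rpow_add two_pos, Real.rpow_logb two_pos (by norm_num) hz,
      Real.rpow_one, ← Real.sqrt_eq_rpow, Real.sqrt_mul hz.le]
    ring
  refine (card_lt_deficit_le _).trans ?_
  rw [← hbound]
  gcongr
  exact min_le_right _ _

end UpperProcess

open UpperProcess

theorem upper_process_binomial_threshold {Ω : Type*} [MeasurableSpace Ω] (μ : Measure Ω)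
    [IsProbabilityMeasure μ]
    (B : ℕ → Ω → Bool) (hBmeas : ∀ n, Measurable (B n))
    (hBindep : iIndepFun B μ)
    (hBhalf : ∀ n, μ {ω | B n ω = true} = 1/2)
    (Zu : ℕ → Ω → ℝ) (z0 : ℝ) (hz0 : z0 ∈ Set.Ioo (0:ℝ) 1)
    (hZ0 : ∀ ω, Zu 0 ω = z0)
    (hrec : ∀ n ω,
      (B (n+1) ω = true → Zu (n+1) ω = (Zu n ω)^2) ∧
      (B (n+1) ω = false → Zu (n+1) ω = 2 * Zu n ω)) :
    ∀ x : ℝ, x ∈ Set.Ioo (0:ℝ) 1 → ∀ n : ℕ, ∀ E : ℕ,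
      (∑ i ∈ Finset.Icc E n, (n.choose i : ℝ)) ≤ 2^n * x →
      2^n * x ≤ (∑ i ∈ Finset.Icc (E - 1) n, (n.choose i : ℝ)) →
      (μ {ω | Zu n ω ≤ (2:ℝ) ^ (-((2:ℝ) ^ (E : ℕ)))}).toReal ≥
        x - 2 * Real.sqrt 2 * Real.sqrt z0 - (n.choose (E - 1) : ℝ) / 2^n := by
  intro x _ n E _ hx
  have hσ : (fun i : Fin n => (i : ℕ) + 1).Injective := fun i j h => Fin.ext (by simpa using h)
  set Heads : Finset (Fin n → Bool) := {v | E ≤ numHeads v}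
  set Good := Heads \ ({v | -Real.logb 2 z0 - 1 < deficit v} : Finset (Fin n → Bool))
  have hevent : {ω | (fun i : Fin n => B (i + 1) ω) ∈ Good} ⊆
      {ω | Zu n ω ≤ (2:ℝ) ^ (-((2:ℝ) ^ (E : ℕ)))} := fun ω hω => by
    simp only [Good, Heads, mem_sdiff, mem_filter, mem_univ, true_and] at hω
    exact upper_process_le_of_le_numHeads hz0.1 hZ0 hrec hω.1 (not_lt.1 hω.2)
  have hHeads : 2 ^ n * x - n.choose (E - 1) ≤ #Heads := by
    have := (Nat.cast_le (α := ℝ)).2 (sum_Icc_pred_choose_le (n := n) E)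
    push_cast at this
    linarith
  have hGood : (#Heads : ℝ) ≤ #Good + 2 ^ n * (2 * √2 * √z0) :=
    (Nat.cast_le.2 card_le_card_sdiff_add_card).trans <| by
      push_cast
      gcongr
      exact card_lt_deficit_le_sqrt hz0.1
  have h2n : (0 : ℝ) < 2 ^ n := by positivity
  rw [ge_iff_le, ← measureReal_def]
  calc x - 2 * √2 * √z0 - n.choose (E - 1) / 2 ^ n ≤ #Good / 2 ^ n := by
        rw [le_div_iff₀ h2n, sub_mul, sub_mul, div_mul_cancel₀ _ h2n.ne']
        linarith
    _ = μ.real {ω | (fun i : Fin n => B (i + 1) ω) ∈ Good} :=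
        (measureReal_tuple_mem hBmeas hBindep hBhalf hσ _).symm
    _ ≤ _ := measureReal_mono hevent
end
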